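/- Let G be a group of affine isometries with orthogonal linear parts, and let O be an orbit of the point group action on a lattice. Fix ξ ∈ O. If for every φ ∈ G fixing any ω ∈ O (A_φ ω = ω) the phase e^{i2π ω^⊤ A_φ^⊤ t_φ} equals 1, then for each ω ∈ O the product of phase factors along a path from ξ to ω in the constraint graph is independent of the chosen path. -/

import Mathlib

/-!
The endpoint and the phase of a path depend only on the product `g` of its labels (in reverse
order): the endpoint is `A_g ξ`, and since `A` is orthogonal the edge weight is a cocycle,
`w(hg, ξ) = w(g, ξ) w(h, A_g ξ)`. If two paths with products `g` and `h` end at the same point,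
then `g⁻¹h` fixes `ξ`, and the cocycle identity gives `w(h, ξ) = w(g⁻¹h, ξ) w(g, ξ) = w(g, ξ)`.
-/

open Matrix Real Complex

/-- Endpoint of a path in the constraint graph: starting at frequency `ξ` and
following the edges `ω → A_g ω` for the listed group elements. -/
def pathEnd {n : ℕ} {G : Type*} (A : G → Matrix (Fin n) (Fin n) ℝ) :
    (Fin n → ℝ) → List G → (Fin n → ℝ)
  | ξ, [] => ξ
  | ξ, g :: l => pathEnd A ((A g).mulVec ξ) l

/-- Product of the edge weights `e^{i2π ω^⊤ A_g^⊤ t_g}` along a path in the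
constraint graph. -/
noncomputable def pathPhase {n : ℕ} {G : Type*} (A : G → Matrix (Fin n) (Fin n) ℝ)
    (t : G → (Fin n → ℝ)) : (Fin n → ℝ) → List G → ℂ
  | _, [] => 1
  | ξ, g :: l =>
      Complex.exp ((2 * Real.pi * Complex.I) * ((ξ ⬝ᵥ (A g)ᵀ.mulVec (t g) : ℝ) : ℂ))
        * pathPhase A t ((A g).mulVec ξ) l

theorem Matrix.dotProduct_mulVec_mulVec_of_transpose_mul_self {m R : Type*} [Fintype m]
    [DecidableEq m] [CommSemiring R] {M : Matrix m m R} (hM : Mᵀ * M = 1) (x y : m → R) :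
    M *ᵥ x ⬝ᵥ M *ᵥ y = x ⬝ᵥ y := by
  rw [dotProduct_mulVec, ← mulVec_transpose, mulVec_mulVec, hM, one_mulVec]

section ConstraintGraph

variable {n : ℕ} {G : Type*} (A : G → Matrix (Fin n) (Fin n) ℝ) (t : G → (Fin n → ℝ))

noncomputable def edgePhase (g : G) (ξ : Fin n → ℝ) : ℂ :=
  Complex.exp ((2 * Real.pi * Complex.I) * ((ξ ⬝ᵥ (A g)ᵀ.mulVec (t g) : ℝ) : ℂ))

theorem edgePhase_one [One G] (ht_one : t 1 = 0) (ξ : Fin n → ℝ) : edgePhase A t 1 ξ = 1 := by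
  simp [edgePhase, ht_one]

theorem dotProduct_transpose_mulVec_mul [Mul G] (hOrth : ∀ g, (A g)ᵀ * A g = 1)
    (hA_mul : ∀ g h, A (g * h) = A g * A h)
    (ht_mul : ∀ g h, t (g * h) = (A g).mulVec (t h) + t g) (g h : G) (ξ : Fin n → ℝ) :
    ξ ⬝ᵥ (A (h * g))ᵀ.mulVec (t (h * g)) =
      ξ ⬝ᵥ (A g)ᵀ.mulVec (t g) + (A g).mulVec ξ ⬝ᵥ (A h)ᵀ.mulVec (t h) := by
  simp only [dotProduct_transpose_mulVec, hA_mul, ht_mul, ← mulVec_mulVec, add_dotProduct,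
    dotProduct_mulVec_mulVec_of_transpose_mul_self (hOrth h)]

theorem edgePhase_mul [Mul G] (hOrth : ∀ g, (A g)ᵀ * A g = 1)
    (hA_mul : ∀ g h, A (g * h) = A g * A h)
    (ht_mul : ∀ g h, t (g * h) = (A g).mulVec (t h) + t g) (g h : G) (ξ : Fin n → ℝ) :
    edgePhase A t (h * g) ξ = edgePhase A t g ξ * edgePhase A t h ((A g).mulVec ξ) := by
  rw [edgePhase, dotProduct_transpose_mulVec_mul A t hOrth hA_mul ht_mul, Complex.ofReal_add,
    mul_add, Complex.exp_add]
  rfl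

theorem pathEnd_eq_mulVec_prod [Monoid G] (hA_one : A 1 = 1)
    (hA_mul : ∀ g h, A (g * h) = A g * A h) (ξ : Fin n → ℝ) (l : List G) :
    pathEnd A ξ l = (A l.reverse.prod).mulVec ξ := by
  induction l generalizing ξ with
  | nil => simp [pathEnd, hA_one]
  | cons g l ih => simp [pathEnd, ih, hA_mul]

theorem pathPhase_eq_edgePhase_prod [Monoid G] (hOrth : ∀ g, (A g)ᵀ * A g = 1)
    (ht_one : t 1 = 0) (hA_mul : ∀ g h, A (g * h) = A g * A h)
    (ht_mul : ∀ g h, t (g * h) = (A g).mulVec (t h) + t g) (ξ : Fin n → ℝ) (l : List G) :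
    pathPhase A t ξ l = edgePhase A t l.reverse.prod ξ := by
  induction l generalizing ξ with
  | nil => simp [pathPhase, edgePhase_one A t ht_one]
  | cons g l ih =>
    rw [pathPhase, ih, List.reverse_cons, List.prod_append, List.prod_singleton,
      edgePhase_mul A t hOrth hA_mul ht_mul]
    rfl

theorem edgePhase_eq_of_mulVec_eq [Group G] (hOrth : ∀ g, (A g)ᵀ * A g = 1)
    (hA_one : A 1 = 1) (hA_mul : ∀ g h, A (g * h) = A g * A h)
    (ht_mul : ∀ g h, t (g * h) = (A g).mulVec (t h) + t g) {ξ : Fin n → ℝ}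
    (hfix : ∀ k, (A k).mulVec ξ = ξ → edgePhase A t k ξ = 1) {g h : G}
    (hgh : (A g).mulVec ξ = (A h).mulVec ξ) :
    edgePhase A t g ξ = edgePhase A t h ξ := by
  have hk : (A (g⁻¹ * h)).mulVec ξ = ξ := by
    rw [hA_mul, ← mulVec_mulVec, ← hgh, mulVec_mulVec, ← hA_mul, inv_mul_cancel, hA_one,
      one_mulVec]
  calc edgePhase A t g ξ
      = edgePhase A t (g⁻¹ * h) ξ * edgePhase A t g ((A (g⁻¹ * h)).mulVec ξ) := by
        rw [hfix _ hk, hk, one_mul]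
    _ = edgePhase A t (g * (g⁻¹ * h)) ξ := (edgePhase_mul A t hOrth hA_mul ht_mul _ _ ξ).symm
    _ = edgePhase A t h ξ := by rw [mul_inv_cancel_left]

end ConstraintGraph

theorem phase_consistent_path_independence_general (n : ℕ) (G : Type*) [Group G]
    (A : G → Matrix (Fin n) (Fin n) ℝ) (t : G → (Fin n → ℝ))
    (hOrth : ∀ g, (A g)ᵀ * A g = 1)
    (hA_one : A 1 = 1) (ht_one : t 1 = 0)
    (hA_mul : ∀ g h, A (g * h) = A g * A h)
    (ht_mul : ∀ g h, t (g * h) = (A g).mulVec (t h) + t g)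
    (O : Set (Fin n → ℝ))
    (hconsistent : ∀ (g : G) (ω : Fin n → ℝ), ω ∈ O → (A g).mulVec ω = ω →
      Complex.exp ((2 * Real.pi * Complex.I) * ((ω ⬝ᵥ (A g)ᵀ.mulVec (t g) : ℝ) : ℂ)) = 1)
    (ξ : Fin n → ℝ) (hξ : ξ ∈ O) :
    ∀ l₁ l₂ : List G, pathEnd A ξ l₁ = pathEnd A ξ l₂ →
      pathPhase A t ξ l₁ = pathPhase A t ξ l₂ := by
  intro l₁ l₂ hend
  rw [pathEnd_eq_mulVec_prod A hA_one hA_mul, pathEnd_eq_mulVec_prod A hA_one hA_mul] at hend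
  rw [pathPhase_eq_edgePhase_prod A t hOrth ht_one hA_mul ht_mul,
    pathPhase_eq_edgePhase_prod A t hOrth ht_one hA_mul ht_mul]
  exact edgePhase_eq_of_mulVec_eq A t hOrth hA_one hA_mul ht_mul
    (fun k hk => hconsistent k ξ hξ hk) hend

/-- On a phase-consistent orbit `O` (every group element fixing a
frequency of `O` has trivial phase factor), the product of phase factors along a
path from `ξ` to `ω` in the constraint graph is independent of the chosen path. -/
theorem phase_consistent_path_independence (n : ℕ) (G : Type*) [Group G]
    (A : G → Matrix (Fin n) (Fin n) ℝ) (t : G → (Fin n → ℝ))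
    (hOrth : ∀ g, (A g)ᵀ * A g = 1)
    (hA_one : A 1 = 1) (ht_one : t 1 = 0)
    (hA_mul : ∀ g h, A (g * h) = A g * A h)
    (ht_mul : ∀ g h, t (g * h) = (A g).mulVec (t h) + t g)
    (O : Set (Fin n → ℝ))
    (hOclosed : ∀ (g : G) (ω : Fin n → ℝ), ω ∈ O → (A g).mulVec ω ∈ O)
    (hconsistent : ∀ (g : G) (ω : Fin n → ℝ), ω ∈ O → (A g).mulVec ω = ω →
      Complex.exp ((2 * Real.pi * Complex.I) * ((ω ⬝ᵥ (A g)ᵀ.mulVec (t g) : ℝ) : ℂ)) = 1)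
    (ξ : Fin n → ℝ) (hξ : ξ ∈ O) :
    ∀ l₁ l₂ : List G, pathEnd A ξ l₁ = pathEnd A ξ l₂ →
      pathPhase A t ξ l₁ = pathPhase A t ξ l₂ :=
  phase_consistent_path_independence_general n G A t hOrth hA_one ht_one hA_mul ht_mul O hconsistent
    ξ hξ
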